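/- arXiv:1808.02691 — 3 statements merged into one kernel-verified Lean document; each statement's English description precedes it below -/
import Mathlib

section
/- Let Ω be a periodic orbit with basin of attraction A(Ω), and assume there exist a compact positively invariant set U with Ω ⊆ int(U) and U ⊆ A(Ω) and constants C, κ > 0 such that for every y ∈ U and every solution φ of φ̇(t) = Df(S_t y)φ(t) one has ‖P_{S_t y} φ(t)‖ ≤ C e^{−κt} ‖P_y φ(0)‖ for all t ≥ 0. Let B : A(Ω) → 𝕊ⁿ be continuous. Fix x ∈ A(Ω) and θ₀ > 0 such that S_θ x is defined for all θ ≥ −θ₀. Then there exists c > 0 such that for all |θ| ≤ θ₀ and all τ ≥ 0: ‖Φ(τ,0;S_θ x)^T P_{S_{τ+θ} x}^T B(S_{τ+θ} x) P_{S_{τ+θ} x} Φ(τ,0;S_θ x)‖ ≤ c e^{−2κτ}. -/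
open Matrix Set Filter MeasureTheory

/-- Euclidean norm of a vector in `ℝⁿ`. -/
noncomputable def euclNorm {n : ℕ} (v : Fin n → ℝ) : ℝ := Real.sqrt (∑ i, v i ^ 2)

/-- Operator norm of a matrix induced by the Euclidean norm. -/
noncomputable def opn {n : ℕ} (A : Matrix (Fin n) (Fin n) ℝ) : ℝ :=
  ‖Matrix.toEuclideanCLM (𝕜 := ℝ) A‖

/-- The projection `P_x = I - f(x)f(x)ᵀ/‖f(x)‖²` onto the hyperplane perpendicular to `f(x)`. -/
noncomputable def Pm {n : ℕ} (f : (Fin n → ℝ) → Fin n → ℝ) (x : Fin n → ℝ) :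
    Matrix (Fin n) (Fin n) ℝ :=
  1 - (euclNorm (f x) ^ 2)⁻¹ • Matrix.vecMulVec (f x) (f x)

/-- The differential operator
`LM(x) = M′(x) + Df(x)ᵀM(x) + M(x)Df(x) - M(x)f(x)f(x)ᵀ(Df(x)+Df(x)ᵀ)/‖f(x)‖²
  - (Df(x)+Df(x)ᵀ)f(x)f(x)ᵀM(x)/‖f(x)‖²`,
where the orbital derivative `M′(x)` has entries `∇M_ij(x) ⋅ f(x)`. -/
noncomputable def LMop {n : ℕ} (f : (Fin n → ℝ) → Fin n → ℝ)
    (Df M : (Fin n → ℝ) → Matrix (Fin n) (Fin n) ℝ) (x : Fin n → ℝ) :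
    Matrix (Fin n) (Fin n) ℝ :=
  (Matrix.of fun i j => fderiv ℝ (fun y => M y i j) x (f x))
    + (Df x)ᵀ * M x + M x * Df x
    - (euclNorm (f x) ^ 2)⁻¹ • (M x * Matrix.vecMulVec (f x) (f x) * (Df x + (Df x)ᵀ))
    - (euclNorm (f x) ^ 2)⁻¹ • ((Df x + (Df x)ᵀ) * Matrix.vecMulVec (f x) (f x) * M x)
/-- Euclidean distance from a point to a set. -/
noncomputable def sdist {n : ℕ} (x : Fin n → ℝ) (A : Set (Fin n → ℝ)) : ℝ :=
  ⨅ y : A, euclNorm (x - (y : Fin n → ℝ))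

/-- The periodic orbit `Ω = {S_t p : t ∈ [0,T]}`. -/
def orbitSet {n : ℕ} (S : ℝ → (Fin n → ℝ) → Fin n → ℝ) (p : Fin n → ℝ) (T : ℝ) :
    Set (Fin n → ℝ) :=
  {y | ∃ t ∈ Set.Icc (0 : ℝ) T, y = S t p}

/-- `Ω` is a periodic orbit: `Ω = {S_t p : t ∈ [0,T]}` with `S_T p = p`, `T > 0`, `f(p) ≠ 0`. -/
def IsPeriodicOrbit {n : ℕ} (S : ℝ → (Fin n → ℝ) → Fin n → ℝ)
    (f : (Fin n → ℝ) → Fin n → ℝ) (Ω : Set (Fin n → ℝ)) : Prop :=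
  ∃ p T, 0 < T ∧ S T p = p ∧ f p ≠ 0 ∧ Ω = orbitSet S p T

/-- Exponential stability of `Ω`: there are `δ, C, μ > 0` such that `dist(x,Ω) ≤ δ` implies
`dist(S_t x, Ω) ≤ C e^{-μ t} dist(x,Ω)` for all `t ≥ 0`. -/
def ExpStable {n : ℕ} (S : ℝ → (Fin n → ℝ) → Fin n → ℝ) (Ω : Set (Fin n → ℝ)) : Prop :=
  ∃ δ > (0:ℝ), ∃ C > (0:ℝ), ∃ μ > (0:ℝ), ∀ x, sdist x Ω ≤ δ →
    ∀ t ≥ (0:ℝ), sdist (S t x) Ω ≤ C * Real.exp (-μ * t) * sdist x Ω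

/-- The basin of attraction `A(Ω) = {x : dist(S_t x, Ω) → 0 as t → ∞}`. -/
def basin {n : ℕ} (S : ℝ → (Fin n → ℝ) → Fin n → ℝ) (Ω : Set (Fin n → ℝ)) :
    Set (Fin n → ℝ) :=
  {x | Tendsto (fun t => sdist (S t x) Ω) atTop (nhds 0)}

/-!
The trajectory of `x` enters `U` at some time, hence so does that of every `S_θ x` with
`|θ| ≤ θ₀`, after a common time `t₁`. On `[0, t₁]` the fundamental matrix is bounded by Grönwall,
`Df` being bounded on the compact piece of trajectory; after `t₁`, the columns of `Φ` restarted at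
`S_{t₁} (S_θ x) ∈ U` solve the variational equation there, so the decay hypothesis gives
`‖P Φ(τ)‖ = O(e^{-κτ})`. As `P` is an orthogonal projection and `B` is bounded on the compact
set (piece of trajectory) ∪ `U` inside `A(Ω)`, `‖(PΦ)ᵀ B (PΦ)‖ ≤ ‖B‖ ‖PΦ‖² = O(e^{-2κτ})`.
-/

open scoped Matrix.Norms.L2Operator
open Topology

lemma euclNorm_eq_norm {n : ℕ} (v : Fin n → ℝ) : euclNorm v = ‖WithLp.toLp 2 v‖ := by
  simp [EuclideanSpace.norm_eq, euclNorm]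

lemma euclNorm_nonneg {n : ℕ} (v : Fin n → ℝ) : 0 ≤ euclNorm v := Real.sqrt_nonneg _

lemma norm_le_euclNorm {n : ℕ} (v : Fin n → ℝ) : ‖v‖ ≤ euclNorm v := by
  rw [euclNorm_eq_norm]
  exact (pi_norm_le_iff_of_nonneg (norm_nonneg _)).2 (PiLp.norm_apply_le (WithLp.toLp 2 v))

lemma opn_eq_norm {n : ℕ} (A : Matrix (Fin n) (Fin n) ℝ) : opn A = ‖A‖ := rfl

lemma euclNorm_mulVec_le {n : ℕ} (A : Matrix (Fin n) (Fin n) ℝ) (v : Fin n → ℝ) :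
    euclNorm (A *ᵥ v) ≤ ‖A‖ * euclNorm v := by
  rw [euclNorm_eq_norm, euclNorm_eq_norm]
  exact A.l2_opNorm_mulVec (WithLp.toLp 2 v)

lemma norm_le_of_forall_euclNorm_mulVec_le {n : ℕ} {A : Matrix (Fin n) (Fin n) ℝ} {c : ℝ}
    (hc : 0 ≤ c) (h : ∀ v, euclNorm (A *ᵥ v) ≤ c * euclNorm v) : ‖A‖ ≤ c :=
  (Matrix.toEuclideanCLM (𝕜 := ℝ) A).opNorm_le_bound hc fun v => by
    have := h (WithLp.ofLp v)
    rw [euclNorm_eq_norm, euclNorm_eq_norm, WithLp.toLp_ofLp] at this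
    exact this

lemma norm_transpose {n : ℕ} (A : Matrix (Fin n) (Fin n) ℝ) : ‖Aᵀ‖ = ‖A‖ := by
  rw [← Matrix.conjTranspose_eq_transpose_of_trivial, Matrix.l2_opNorm_conjTranspose]

lemma norm_transpose_mul_mul_le {n : ℕ} (A G : Matrix (Fin n) (Fin n) ℝ) :
    ‖Aᵀ * G * A‖ ≤ ‖G‖ * ‖A‖ ^ 2 :=
  calc ‖Aᵀ * G * A‖ ≤ ‖Aᵀ‖ * ‖G‖ * ‖A‖ := norm_mul₃_le
    _ = ‖G‖ * ‖A‖ ^ 2 := by rw [norm_transpose]; ring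

lemma toEuclideanCLM_Pm {n : ℕ} (f : (Fin n → ℝ) → Fin n → ℝ) (z : Fin n → ℝ) :
    Matrix.toEuclideanCLM (𝕜 := ℝ) (Pm f z) = (ℝ ∙ WithLp.toLp 2 (f z))ᗮ.starProjection := by
  ext1 w
  rw [Submodule.starProjection_orthogonal_val, Submodule.starProjection_singleton]
  ext i
  simp only [Pm, map_sub, map_one, map_smul, _root_.sub_apply, one_apply_eq_self,
    _root_.smul_apply, PiLp.sub_apply, PiLp.smul_apply,
    ofLp_toEuclideanCLM, EuclideanSpace.inner_eq_star_dotProduct, ← euclNorm_eq_norm,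
    mulVec, dotProduct, vecMulVec_apply, star_trivial, smul_eq_mul,
    RCLike.ofReal_real_eq_id, id, Finset.mul_sum, Finset.sum_div, Finset.sum_mul]
  exact congrArg _ (Finset.sum_congr rfl fun j _ => by ring)

lemma norm_Pm_le_one {n : ℕ} (f : (Fin n → ℝ) → Fin n → ℝ) (z : Fin n → ℝ) : ‖Pm f z‖ ≤ 1 := by
  rw [Matrix.cstar_norm_def, toEuclideanCLM_Pm]
  exact Submodule.starProjection_norm_le _

lemma norm_Pm_mul_le {n : ℕ} (f : (Fin n → ℝ) → Fin n → ℝ) (z : Fin n → ℝ)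
    (A : Matrix (Fin n) (Fin n) ℝ) : ‖Pm f z * A‖ ≤ ‖A‖ :=
  (norm_mul_le _ _).trans (mul_le_of_le_one_left (norm_nonneg _) (norm_Pm_le_one f z))

lemma hasDerivAt_mulVec_of_entries {m ι : Type*} [Fintype ι] {M : ℝ → Matrix m ι ℝ}
    {M' : Matrix m ι ℝ} {t : ℝ} (hM : ∀ i j, HasDerivAt (fun τ => M τ i j) (M' i j) t)
    (v : ι → ℝ) : HasDerivAt (fun τ => M τ *ᵥ v) (M' *ᵥ v) t :=
  hasDerivAt_pi.2 fun i => HasDerivAt.fun_sum fun j _ => (hM i j).mul_const (v j)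

lemma euclNorm_le_of_hasDerivAt_mulVec {n : ℕ} {A : ℝ → Matrix (Fin n) (Fin n) ℝ}
    {ψ : ℝ → Fin n → ℝ} {L b : ℝ} (hψ : ∀ t ∈ Icc 0 b, HasDerivAt ψ (A t *ᵥ ψ t) t)
    (hA : ∀ t ∈ Ico 0 b, ‖A t‖ ≤ L) {t : ℝ} (ht : t ∈ Icc 0 b) :
    euclNorm (ψ t) ≤ euclNorm (ψ 0) * Real.exp (L * t) := by
  let e := (EuclideanSpace.equiv (Fin n) ℝ).symm
  have he : ∀ w, ‖e w‖ = euclNorm w := fun w => (euclNorm_eq_norm w).symm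
  have hderiv : ∀ s ∈ Icc 0 b, HasDerivAt (e ∘ ψ) (e (A s *ᵥ ψ s)) s := fun s hs =>
    e.hasFDerivAt.comp_hasDerivAt s (hψ s hs)
  have := norm_le_gronwallBound_of_norm_deriv_right_le (f := e ∘ ψ) (K := L) (ε := 0)
    (fun s hs => (hderiv s hs).continuousAt.continuousWithinAt)
    (fun s hs => (hderiv s (Ico_subset_Icc_self hs)).hasDerivWithinAt) le_rfl
    (fun s hs => by
      simp only [Function.comp_apply, add_zero, he]
      exact (euclNorm_mulVec_le _ _).trans
        (mul_le_mul_of_nonneg_right (hA s hs) (euclNorm_nonneg _)))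
    t ht
  simpa only [Function.comp_apply, he, gronwallBound_ε0, sub_zero] using this

lemma continuous_of_hasFDerivAt_mulVecLin {ι : Type*} [Fintype ι] [DecidableEq ι]
    {f : (ι → ℝ) → ι → ℝ} {Df : (ι → ℝ) → Matrix ι ι ℝ} (hf : ContDiff ℝ 1 f)
    (hDf : ∀ y, HasFDerivAt f (LinearMap.toContinuousLinearMap (Df y).mulVecLin) y) :
    Continuous Df := by
  have hentry : ∀ y i j, Df y i j = fderiv ℝ f y (Pi.single j 1) i := fun y i j => by
    simp [(hDf y).fderiv]
  refine continuous_pi fun i => continuous_pi fun j => ?_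
  simp only [hentry]
  exact continuous_apply i |>.comp <| (hf.continuous_fderiv one_ne_zero).clm_apply continuous_const

lemma IsCompact.exists_forall_norm_le_of_eventually_mem {X E : Type*} [TopologicalSpace X]
    [SeminormedAddCommGroup E] {g : X → E} {s U : Set X} {γ : ℝ → X} {a : ℝ}
    (hU : IsCompact U) (hg : ContinuousOn g s) (hγ : Continuous γ) (hUs : U ⊆ s)
    (hγs : ∀ t ≥ a, γ t ∈ s) (hγU : ∀ᶠ t in atTop, γ t ∈ U) :
    ∃ M, ∀ t ≥ a, ‖g (γ t)‖ ≤ M := by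
  obtain ⟨b, hb⟩ := eventually_atTop.1 hγU
  have hK : IsCompact (γ '' Icc a b ∪ U) := (isCompact_Icc.image hγ).union hU
  have hKs : γ '' Icc a b ∪ U ⊆ s :=
    union_subset (image_subset_iff.2 fun t ht => hγs t ht.1) hUs
  obtain ⟨M, hM⟩ := hK.exists_bound_of_continuousOn (hg.mono hKs)
  refine ⟨M, fun t ht => hM _ ?_⟩
  rcases le_total t b with htb | hbt
  · exact Or.inl ⟨t, ⟨ht, htb⟩, rfl⟩
  · exact Or.inr (hb t hbt)

section Basin

variable {n : ℕ} {S : ℝ → (Fin n → ℝ) → Fin n → ℝ} {Ω : Set (Fin n → ℝ)}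

lemma orbitSet_eq_image (p : Fin n → ℝ) (T : ℝ) :
    orbitSet S p T = (fun t => S t p) '' Icc 0 T := by
  ext y
  simp only [orbitSet, mem_ofPred_eq, mem_image, eq_comm]

lemma flow_mem_basin (hSadd : ∀ s t x, S (s + t) x = S s (S t x)) {x : Fin n → ℝ}
    (hx : x ∈ basin S Ω) (t : ℝ) : S t x ∈ basin S Ω := by
  have : Tendsto (fun s => sdist (S (s + t) x) Ω) atTop (𝓝 0) :=
    hx.comp (tendsto_atTop_add_const_right atTop t tendsto_id)
  simpa only [basin, mem_ofPred_eq, hSadd] using this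

lemma mem_thickening_of_sdist_lt (hΩ : Ω.Nonempty) {z : Fin n → ℝ} {ε : ℝ}
    (h : sdist z Ω < ε) : z ∈ Metric.thickening ε Ω := by
  have : Nonempty Ω := hΩ.to_subtype
  obtain ⟨y, hy⟩ := exists_lt_of_ciInf_lt h
  exact Metric.mem_thickening_iff.2 ⟨y, y.2, (norm_le_euclNorm _).trans_lt hy⟩

lemma eventually_mem_of_mem_basin (hΩc : IsCompact Ω) (hΩ : Ω.Nonempty) {U : Set (Fin n → ℝ)}
    (hU : Ω ⊆ interior U) {x : Fin n → ℝ} (hx : x ∈ basin S Ω) :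
    ∀ᶠ t in atTop, S t x ∈ U := by
  obtain ⟨ε, hε, hεU⟩ := hΩc.exists_thickening_subset_open isOpen_interior hU
  filter_upwards [(tendsto_order.1 hx).2 ε hε] with t ht
  exact interior_subset (hεU (mem_thickening_of_sdist_lt hΩ ht))

end Basin

def HasProjectedDecay {n : ℕ} (f : (Fin n → ℝ) → Fin n → ℝ)
    (Df : (Fin n → ℝ) → Matrix (Fin n) (Fin n) ℝ) (S : ℝ → (Fin n → ℝ) → Fin n → ℝ)
    (C κ : ℝ) (y : Fin n → ℝ) : Prop :=
  ∀ φ : ℝ → Fin n → ℝ,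
    (∀ t ≥ (0:ℝ), HasDerivWithinAt φ ((Df (S t y)).mulVec (φ t)) (Set.Ici 0) t) →
    ∀ t ≥ (0:ℝ), euclNorm ((Pm f (S t y)).mulVec (φ t)) ≤
      C * Real.exp (-κ * t) * euclNorm ((Pm f y).mulVec (φ 0))

section Variational

variable {n : ℕ} {f : (Fin n → ℝ) → Fin n → ℝ} {Df : (Fin n → ℝ) → Matrix (Fin n) (Fin n) ℝ}
  {S : ℝ → (Fin n → ℝ) → Fin n → ℝ} {Φ : ℝ → (Fin n → ℝ) → Matrix (Fin n) (Fin n) ℝ}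

lemma hasDerivAt_fundamental_mulVec
    (hΦ : ∀ x t i j, HasDerivAt (fun τ => Φ τ x i j) ((Df (S t x) * Φ t x) i j) t)
    (z v : Fin n → ℝ) (t : ℝ) :
    HasDerivAt (fun τ => Φ τ z *ᵥ v) (Df (S t z) *ᵥ (Φ t z *ᵥ v)) t := by
  rw [Matrix.mulVec_mulVec]
  exact hasDerivAt_mulVec_of_entries (hΦ z t) v

lemma norm_fundamental_le (hΦ0 : ∀ x, Φ 0 x = 1)
    (hΦ : ∀ x t i j, HasDerivAt (fun τ => Φ τ x i j) ((Df (S t x) * Φ t x) i j) t)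
    {z : Fin n → ℝ} {L b : ℝ} (hL : 0 ≤ L) (hDf : ∀ t ∈ Ico 0 b, ‖Df (S t z)‖ ≤ L)
    {t : ℝ} (ht : t ∈ Icc 0 b) : ‖Φ t z‖ ≤ Real.exp (L * b) := by
  refine norm_le_of_forall_euclNorm_mulVec_le (Real.exp_pos _).le fun v => ?_
  have := euclNorm_le_of_hasDerivAt_mulVec (fun s _ => hasDerivAt_fundamental_mulVec hΦ z v s)
    hDf ht
  rw [hΦ0, Matrix.one_mulVec] at this
  calc euclNorm (Φ t z *ᵥ v) ≤ euclNorm v * Real.exp (L * t) := this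
    _ ≤ Real.exp (L * b) * euclNorm v := by
      rw [mul_comm]
      gcongr
      exacts [euclNorm_nonneg _, ht.2]

lemma norm_Pm_mul_fundamental_le (hSadd : ∀ s t x, S (s + t) x = S s (S t x))
    (hΦ : ∀ x t i j, HasDerivAt (fun τ => Φ τ x i j) ((Df (S t x) * Φ t x) i j) t)
    {C κ t₁ E : ℝ} {z : Fin n → ℝ} (hC : 0 ≤ C) (hκ : 0 ≤ κ) (ht₁ : 0 ≤ t₁)
    (hdecay : HasProjectedDecay f Df S C κ (S t₁ z)) (hE : ∀ t ∈ Icc 0 t₁, ‖Φ t z‖ ≤ E)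
    {τ : ℝ} (hτ : 0 ≤ τ) :
    ‖Pm f (S τ z) * Φ τ z‖ ≤ max C 1 * E * Real.exp (κ * t₁) * Real.exp (-κ * τ) := by
  have hE0 : 0 ≤ E := (norm_nonneg _).trans (hE 0 ⟨le_rfl, ht₁⟩)
  have hexp : Real.exp (κ * t₁) * Real.exp (-κ * τ) = Real.exp (-κ * (τ - t₁)) := by
    rw [← Real.exp_add]; ring_nf
  rw [mul_assoc _ (Real.exp _), hexp]
  rcases le_total τ t₁ with hτt₁ | ht₁τ
  · calc ‖Pm f (S τ z) * Φ τ z‖ ≤ E := (norm_Pm_mul_le f _ _).trans (hE τ ⟨hτ, hτt₁⟩)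
      _ = 1 * E * 1 := by ring
      _ ≤ max C 1 * E * Real.exp (-κ * (τ - t₁)) := by
        gcongr
        exacts [le_max_right _ _, Real.one_le_exp (by nlinarith)]
  · refine norm_le_of_forall_euclNorm_mulVec_le (by positivity) fun v => ?_
    -- The solution through `S t₁ z` is the fundamental solution through `z`, shifted by `t₁`.
    have hφ : ∀ s ≥ (0:ℝ), HasDerivWithinAt (fun s => Φ (s + t₁) z *ᵥ v)
        (Df (S s (S t₁ z)) *ᵥ (Φ (s + t₁) z *ᵥ v)) (Ici 0) s := fun s _ => by
      rw [← hSadd]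
      exact ((hasDerivAt_fundamental_mulVec hΦ z v (s + t₁)).comp_add_const s t₁).hasDerivWithinAt
    have := hdecay _ hφ (τ - t₁) (sub_nonneg.2 ht₁τ)
    rw [← hSadd, sub_add_cancel, zero_add] at this
    calc euclNorm ((Pm f (S τ z) * Φ τ z) *ᵥ v)
        ≤ C * Real.exp (-κ * (τ - t₁)) * euclNorm ((Pm f (S t₁ z) * Φ t₁ z) *ᵥ v) := by
          rwa [← Matrix.mulVec_mulVec, ← Matrix.mulVec_mulVec]
      _ ≤ C * Real.exp (-κ * (τ - t₁)) * (E * euclNorm v) := by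
          gcongr
          exact (euclNorm_mulVec_le _ _).trans (mul_le_mul_of_nonneg_right
            ((norm_Pm_mul_le f _ _).trans (hE t₁ ⟨ht₁, le_rfl⟩)) (euclNorm_nonneg _))
      _ = C * (E * Real.exp (-κ * (τ - t₁)) * euclNorm v) := by ring
      _ ≤ max C 1 * (E * Real.exp (-κ * (τ - t₁)) * euclNorm v) :=
          mul_le_mul_of_nonneg_right (le_max_left _ _) (by positivity [euclNorm_nonneg v])
      _ = max C 1 * E * Real.exp (-κ * (τ - t₁)) * euclNorm v := by ring

lemma exists_norm_Pm_mul_fundamental_le (hSadd : ∀ s t x, S (s + t) x = S s (S t x))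
    (hΦ0 : ∀ x, Φ 0 x = 1)
    (hΦ : ∀ x t i j, HasDerivAt (fun τ => Φ τ x i j) ((Df (S t x) * Φ t x) i j) t)
    {U : Set (Fin n → ℝ)} {C κ θ₀ L : ℝ} {x : Fin n → ℝ} (hC : 0 ≤ C) (hκ : 0 ≤ κ)
    (hθ₀ : 0 ≤ θ₀) (hdecay : ∀ y ∈ U, HasProjectedDecay f Df S C κ y)
    (hU : ∀ᶠ t in atTop, S t x ∈ U) (hL : 0 ≤ L) (hDf : ∀ t ≥ -θ₀, ‖Df (S t x)‖ ≤ L) :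
    ∃ D > 0, ∀ θ, |θ| ≤ θ₀ → ∀ τ ≥ (0:ℝ),
      ‖Pm f (S (τ + θ) x) * Φ τ (S θ x)‖ ≤ D * Real.exp (-κ * τ) := by
  obtain ⟨a, ha⟩ := eventually_atTop.1 hU
  set t₁ := max a 0 + θ₀
  have ht₁ : 0 ≤ t₁ := by positivity
  refine ⟨max C 1 * Real.exp (L * t₁) * Real.exp (κ * t₁), by positivity, fun θ hθ τ hτ => ?_⟩
  obtain ⟨hθl, hθr⟩ := abs_le.1 hθ
  rw [hSadd]
  refine norm_Pm_mul_fundamental_le hSadd hΦ hC hκ ht₁ ?_ (fun t ht => ?_) hτ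
  · rw [← hSadd]
    exact hdecay _ (ha _ (by linarith [le_max_left a 0]))
  · refine norm_fundamental_le hΦ0 hΦ hL (fun s hs => ?_) ht
    rw [← hSadd]
    exact hDf _ (by linarith [hs.1])

end Variational

theorem stmt6_general {n : ℕ} (f : (Fin n → ℝ) → Fin n → ℝ)
    (Df : (Fin n → ℝ) → Matrix (Fin n) (Fin n) ℝ)
    (hf : ContDiff ℝ 1 f)
    (hDf : ∀ y, HasFDerivAt f (LinearMap.toContinuousLinearMap ((Df y).mulVecLin)) y)
    -- `S` is the flow of `ẋ = f(x)`
    (S : ℝ → (Fin n → ℝ) → Fin n → ℝ)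
    (hS0 : ∀ x, S 0 x = x)
    (hS : ∀ x t, HasDerivAt (fun τ => S τ x) (f (S t x)) t)
    (hSadd : ∀ s t x, S (s + t) x = S s (S t x))
    -- `Φ t x = Φ(t,0;x)` is the principal fundamental matrix solution of the variational eq.
    (Φ : ℝ → (Fin n → ℝ) → Matrix (Fin n) (Fin n) ℝ)
    (hΦ0 : ∀ x, Φ 0 x = 1)
    (hΦ : ∀ x t i j, HasDerivAt (fun τ => Φ τ x i j) ((Df (S t x) * Φ t x) i j) t)
    -- `Ω` is a periodic orbit
    (p : Fin n → ℝ) (T : ℝ) (hT : 0 < T)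
    (Ω : Set (Fin n → ℝ)) (hΩ : Ω = orbitSet S p T)
    -- `U` is a compact positively invariant neighborhood of `Ω` inside `A(Ω)`
    (U : Set (Fin n → ℝ)) (hUcomp : IsCompact U)
    (hUnbhd : Ω ⊆ interior U) (hUbasin : U ⊆ basin S Ω)
    -- the exponential decay of projected solutions of the variational equation on `U`
    (C κ : ℝ) (hC : 0 < C) (hκ : 0 < κ)
    (hdecay : ∀ y ∈ U, ∀ φ : ℝ → Fin n → ℝ,
      (∀ t ≥ (0:ℝ), HasDerivWithinAt φ ((Df (S t y)).mulVec (φ t)) (Set.Ici 0) t) →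
      ∀ t ≥ (0:ℝ), euclNorm ((Pm f (S t y)).mulVec (φ t)) ≤
        C * Real.exp (-κ * t) * euclNorm ((Pm f y).mulVec (φ 0)))
    -- `B` is continuous and symmetric-matrix-valued on `A(Ω)`
    (B : (Fin n → ℝ) → Matrix (Fin n) (Fin n) ℝ)
    (hBc : ∀ i j, ContinuousOn (fun y => B y i j) (basin S Ω))
    -- fix `x ∈ A(Ω)` and `θ₀ > 0`
    (x : Fin n → ℝ) (hx : x ∈ basin S Ω) (θ₀ : ℝ) (hθ₀ : 0 < θ₀) :
    ∃ c > (0:ℝ), ∀ θ : ℝ, |θ| ≤ θ₀ → ∀ τ ≥ (0:ℝ),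
      opn ((Φ τ (S θ x))ᵀ *
          ((Pm f (S (τ + θ) x))ᵀ * B (S (τ + θ) x) * Pm f (S (τ + θ) x)) *
          Φ τ (S θ x)) ≤ c * Real.exp (-2 * κ * τ) := by
  have hScont : ∀ z, Continuous fun t => S t z := fun z =>
    continuous_iff_continuousAt.2 fun t => (hS z t).continuousAt
  have hΩc : IsCompact Ω := by
    rw [hΩ, orbitSet_eq_image]
    exact isCompact_Icc.image (hScont p)
  have hpΩ : p ∈ Ω := hΩ ▸ ⟨0, ⟨le_rfl, hT.le⟩, (hS0 p).symm⟩
  have hxU := eventually_mem_of_mem_basin hΩc ⟨p, hpΩ⟩ hUnbhd hx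
  obtain ⟨L, hL⟩ := hUcomp.exists_forall_norm_le_of_eventually_mem (a := -θ₀)
    (continuous_of_hasFDerivAt_mulVecLin hf hDf).continuousOn (hScont x) (subset_univ U)
    (fun t _ => mem_univ _) hxU
  obtain ⟨M, hM⟩ := hUcomp.exists_forall_norm_le_of_eventually_mem (g := B) (a := -θ₀)
    (continuousOn_pi.2 fun i => continuousOn_pi.2 (hBc i)) (hScont x) hUbasin
    (fun t _ => flow_mem_basin hSadd hx t) hxU
  obtain ⟨D, hD, hPΦ⟩ := exists_norm_Pm_mul_fundamental_le hSadd hΦ0 hΦ hC.le hκ.le hθ₀.le hdecay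
    hxU (le_max_right L 0) fun t ht => (hL t ht).trans (le_max_left L 0)
  refine ⟨max M 1 * D ^ 2, by positivity, fun θ hθ τ hτ => ?_⟩
  calc _ = ‖(Pm f (S (τ + θ) x) * Φ τ (S θ x))ᵀ * B (S (τ + θ) x) *
          (Pm f (S (τ + θ) x) * Φ τ (S θ x))‖ := by
        simp only [opn_eq_norm, Matrix.transpose_mul, Matrix.mul_assoc]
    _ ≤ ‖B (S (τ + θ) x)‖ * ‖Pm f (S (τ + θ) x) * Φ τ (S θ x)‖ ^ 2 :=
        norm_transpose_mul_mul_le _ _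
    _ ≤ max M 1 * (D * Real.exp (-κ * τ)) ^ 2 := by
        gcongr
        exacts [(hM (τ + θ) (by linarith [neg_abs_le θ])).trans (le_max_left M 1), hPΦ θ hθ τ hτ]
    _ = max M 1 * D ^ 2 * Real.exp (-2 * κ * τ) := by
        rw [mul_pow, ← Real.exp_nat_mul]
        ring_nf

/-- Lemma 3.6: if the projected solutions of the variational equation
decay exponentially on a compact positively invariant neighborhood `U` of `Ω` inside `A(Ω)`,
and `B` is continuous on `A(Ω)`, then for fixed `x ∈ A(Ω)` and `θ₀ > 0` there is `c > 0`
with `‖Φ(τ,0;S_θ x)ᵀ P_{S_{τ+θ} x}ᵀ B(S_{τ+θ} x) P_{S_{τ+θ} x} Φ(τ,0;S_θ x)‖ ≤ c e^{−2κτ}`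
for all `|θ| ≤ θ₀` and `τ ≥ 0`. -/
theorem stmt6 {n : ℕ} (f : (Fin n → ℝ) → Fin n → ℝ)
    (Df : (Fin n → ℝ) → Matrix (Fin n) (Fin n) ℝ)
    (hf : ContDiff ℝ 1 f)
    (hDf : ∀ y, HasFDerivAt f (LinearMap.toContinuousLinearMap ((Df y).mulVecLin)) y)
    -- `S` is the flow of `ẋ = f(x)`
    (S : ℝ → (Fin n → ℝ) → Fin n → ℝ)
    (hS0 : ∀ x, S 0 x = x)
    (hS : ∀ x t, HasDerivAt (fun τ => S τ x) (f (S t x)) t)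
    (hSadd : ∀ s t x, S (s + t) x = S s (S t x))
    -- `Φ t x = Φ(t,0;x)` is the principal fundamental matrix solution of the variational eq.
    (Φ : ℝ → (Fin n → ℝ) → Matrix (Fin n) (Fin n) ℝ)
    (hΦ0 : ∀ x, Φ 0 x = 1)
    (hΦ : ∀ x t i j, HasDerivAt (fun τ => Φ τ x i j) ((Df (S t x) * Φ t x) i j) t)
    -- `Ω` is a periodic orbit
    (p : Fin n → ℝ) (T : ℝ) (hT : 0 < T) (hpT : S T p = p) (hfp : f p ≠ 0)
    (Ω : Set (Fin n → ℝ)) (hΩ : Ω = orbitSet S p T)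
    -- `U` is a compact positively invariant neighborhood of `Ω` inside `A(Ω)`
    (U : Set (Fin n → ℝ)) (hUcomp : IsCompact U)
    (hUinv : ∀ y ∈ U, ∀ t ≥ (0:ℝ), S t y ∈ U)
    (hUnbhd : Ω ⊆ interior U) (hUbasin : U ⊆ basin S Ω)
    -- the exponential decay of projected solutions of the variational equation on `U`
    (C κ : ℝ) (hC : 0 < C) (hκ : 0 < κ)
    (hdecay : ∀ y ∈ U, ∀ φ : ℝ → Fin n → ℝ,
      (∀ t ≥ (0:ℝ), HasDerivWithinAt φ ((Df (S t y)).mulVec (φ t)) (Set.Ici 0) t) →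
      ∀ t ≥ (0:ℝ), euclNorm ((Pm f (S t y)).mulVec (φ t)) ≤
        C * Real.exp (-κ * t) * euclNorm ((Pm f y).mulVec (φ 0)))
    -- `B` is continuous and symmetric-matrix-valued on `A(Ω)`
    (B : (Fin n → ℝ) → Matrix (Fin n) (Fin n) ℝ)
    (hBc : ∀ i j, ContinuousOn (fun y => B y i j) (basin S Ω))
    (hBsym : ∀ y ∈ basin S Ω, (B y)ᵀ = B y)
    -- fix `x ∈ A(Ω)` and `θ₀ > 0`
    (x : Fin n → ℝ) (hx : x ∈ basin S Ω) (θ₀ : ℝ) (hθ₀ : 0 < θ₀) :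
    ∃ c > (0:ℝ), ∀ θ : ℝ, |θ| ≤ θ₀ → ∀ τ ≥ (0:ℝ),
      opn ((Φ τ (S θ x))ᵀ *
          ((Pm f (S (τ + θ) x))ᵀ * B (S (τ + θ) x) * Pm f (S (τ + θ) x)) *
          Φ τ (S θ x)) ≤ c * Real.exp (-2 * κ * τ) :=
  stmt6_general f Df hf hDf S hS0 hS hSadd Φ hΦ0 hΦ p T hT Ω hΩ U hUcomp hUnbhd hUbasin C κ hC hκ
    hdecay B hBc x hx θ₀ hθ₀
end

section
/- Let x ∈ ℝⁿ be such that the flow S_t x is defined and f(S_t x) ≠ 0 for all t ≥ 0, and define Ã(t,x) := Df(S_t x) − (f(S_t x) f(S_t x)^T/‖f(S_t x)‖²)(Df(S_t x)^T + Df(S_t x)). Then φ₀(t) := f(S_t x)/‖f(S_t x)‖² satisfies φ̇₀(t) = Ã(t,x) φ₀(t) for all t ≥ 0. -/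
open Matrix Set Filter MeasureTheory

/-! Along the orbit, `u(t) = f(S_t x)` satisfies `u̇ = Df u`. Differentiating `u/(u ⬝ u)` by the
quotient rule gives `Df u/(u ⬝ u) - 2 (u ⬝ Df u) u/(u ⬝ u)²`, and since `u ⬝ (Dfᵀ + Df) u = 2 u ⬝ Df u`
this is exactly `Ã` applied to `u/(u ⬝ u)`. -/

theorem euclNorm_sq {n : ℕ} (v : Fin n → ℝ) : euclNorm v ^ 2 = v ⬝ᵥ v := by
  rw [euclNorm, Real.sq_sqrt (Finset.sum_nonneg fun i _ => sq_nonneg _)]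
  simp only [dotProduct, sq]

section Calculus

variable {m : Type*} [Fintype m] {u v : ℝ → m → ℝ} {u' v' : m → ℝ} {s : Set ℝ} {t : ℝ}

theorem HasDerivWithinAt.dotProduct (hu : HasDerivWithinAt u u' s t)
    (hv : HasDerivWithinAt v v' s t) :
    HasDerivWithinAt (fun r => u r ⬝ᵥ v r) (u' ⬝ᵥ v t + u t ⬝ᵥ v') s t := by
  have hsum := HasDerivWithinAt.fun_sum (u := Finset.univ) fun i _ =>
    (hasDerivWithinAt_pi.mp hu i).mul (hasDerivWithinAt_pi.mp hv i)
  exact hsum.congr_deriv (by simp only [_root_.dotProduct, Finset.sum_add_distrib])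

theorem HasDerivWithinAt.inv_dotProduct_self_smul (hu : HasDerivWithinAt u u' s t)
    (ht : u t ≠ 0) :
    HasDerivWithinAt (fun r => (u r ⬝ᵥ u r)⁻¹ • u r)
      ((u t ⬝ᵥ u t)⁻¹ • u' - (2 * (u t ⬝ᵥ u t)⁻¹ ^ 2 * (u t ⬝ᵥ u')) • u t) s t := by
  have hnorm : u t ⬝ᵥ u t ≠ 0 := fun h => ht (dotProduct_self_eq_zero.mp h)
  refine (((hu.dotProduct hu).inv hnorm).smul hu).congr_deriv ?_
  rw [dotProduct_comm u' (u t), sub_eq_add_neg, ← neg_smul]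
  congr 2
  field_simp
  ring

end Calculus

theorem sub_vecMulVec_mul_transpose_add_mulVec_smul {m : Type*} [Fintype m]
    (A : Matrix m m ℝ) (u : m → ℝ) (c : ℝ) :
    (A - c • (vecMulVec u u * (Aᵀ + A))) *ᵥ (c • u)
      = c • (A *ᵥ u) - (2 * c ^ 2 * (u ⬝ᵥ A *ᵥ u)) • u := by
  have hsymm : u ⬝ᵥ (Aᵀ + A) *ᵥ u = 2 * (u ⬝ᵥ A *ᵥ u) := by
    rw [add_mulVec, dotProduct_add, dotProduct_mulVec u Aᵀ, vecMul_transpose, dotProduct_comm,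
      two_mul]
  rw [sub_mulVec, smul_mulVec, ← mulVec_mulVec, mulVec_smul, mulVec_smul, vecMulVec_mulVec,
    dotProduct_smul, hsymm, op_smul_eq_smul, smul_smul]
  congr 2
  simp only [smul_eq_mul]
  ring

theorem stmt15_general {n : ℕ} (f : (Fin n → ℝ) → Fin n → ℝ)
    (Df : (Fin n → ℝ) → Matrix (Fin n) (Fin n) ℝ)
    (hDf : ∀ y, HasFDerivAt f (LinearMap.toContinuousLinearMap ((Df y).mulVecLin)) y)
    -- `g t = S_t x` is the forward trajectory through `x`
    (g : ℝ → Fin n → ℝ)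
    (hg : ∀ t ≥ (0:ℝ), HasDerivWithinAt g (f (g t)) (Set.Ici 0) t)
    (hfg : ∀ t ≥ (0:ℝ), f (g t) ≠ 0)
    (Atil : ℝ → Matrix (Fin n) (Fin n) ℝ)
    (hAtil : ∀ t, Atil t = Df (g t) -
      (euclNorm (f (g t)) ^ 2)⁻¹ •
        (Matrix.vecMulVec (f (g t)) (f (g t)) * ((Df (g t))ᵀ + Df (g t))))
    (φ₀ : ℝ → Fin n → ℝ) (hφ₀ : ∀ t, φ₀ t = (euclNorm (f (g t)) ^ 2)⁻¹ • f (g t)) :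
    ∀ t ≥ (0:ℝ), HasDerivWithinAt φ₀ ((Atil t).mulVec (φ₀ t)) (Set.Ici 0) t := by
  intro t ht
  have hφ₀_eq : φ₀ = fun r => (f (g r) ⬝ᵥ f (g r))⁻¹ • f (g r) :=
    funext fun r => by rw [hφ₀, euclNorm_sq]
  have hfg_deriv : HasDerivWithinAt (f ∘ g) (Df (g t) *ᵥ f (g t)) (Set.Ici 0) t :=
    (hDf (g t)).comp_hasDerivWithinAt t (hg t ht)
  rw [hφ₀_eq, hAtil, euclNorm_sq, sub_vecMulVec_mul_transpose_add_mulVec_smul]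
  exact hfg_deriv.inv_dotProduct_self_smul (hfg t ht)

/-- `φ₀(t) := f(S_t x)/‖f(S_t x)‖²` solves `φ̇₀(t) = Ã(t,x) φ₀(t)` where
`Ã(t,x) = Df(S_t x) − (f(S_t x)f(S_t x)ᵀ/‖f(S_t x)‖²)(Df(S_t x)ᵀ + Df(S_t x))`. -/
theorem stmt15 {n : ℕ} (f : (Fin n → ℝ) → Fin n → ℝ)
    (Df : (Fin n → ℝ) → Matrix (Fin n) (Fin n) ℝ)
    (hf : ContDiff ℝ 1 f)
    (hDf : ∀ y, HasFDerivAt f (LinearMap.toContinuousLinearMap ((Df y).mulVecLin)) y)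
    (x : Fin n → ℝ)
    -- `g t = S_t x` is the forward trajectory through `x`
    (g : ℝ → Fin n → ℝ) (hg0 : g 0 = x)
    (hg : ∀ t ≥ (0:ℝ), HasDerivWithinAt g (f (g t)) (Set.Ici 0) t)
    (hfg : ∀ t ≥ (0:ℝ), f (g t) ≠ 0)
    (Atil : ℝ → Matrix (Fin n) (Fin n) ℝ)
    (hAtil : ∀ t, Atil t = Df (g t) -
      (euclNorm (f (g t)) ^ 2)⁻¹ •
        (Matrix.vecMulVec (f (g t)) (f (g t)) * ((Df (g t))ᵀ + Df (g t))))
    (φ₀ : ℝ → Fin n → ℝ) (hφ₀ : ∀ t, φ₀ t = (euclNorm (f (g t)) ^ 2)⁻¹ • f (g t)) :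
    ∀ t ≥ (0:ℝ), HasDerivWithinAt φ₀ ((Atil t).mulVec (φ₀ t)) (Set.Ici 0) t :=
  stmt15_general f Df hDf g hg hfg Atil hAtil φ₀ hφ₀
end

section
/- Let r, K, a : [0,∞) → ℝ be nonnegative locally integrable functions and let b : [0,∞) → ℝ be a nonnegative continuous function such that r(θ) ≤ a(θ) + K(θ) ∫₀^θ b(s) r(s) ds holds for almost all θ ≥ 0. Then r(θ) ≤ a(θ) + K(θ) (∫₀^θ a(s) b(s) ds) · exp(∫₀^θ K(s) b(s) ds) holds for almost all θ ≥ 0. -/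
/-!
With `W = ∫₀^· w` and `V = ∫₀^· v`, the product `W · exp (-V)` is absolutely continuous
(primitives of integrable functions are, and `exp` is locally Lipschitz), and where
`w ≤ u + v W` its a.e. derivative `(w - v W) exp (-V)` is at most `u exp (-V)`.
The fundamental theorem of calculus for absolutely continuous functions then gives
`W T ≤ ∫₀^T u(s) exp (∫ₛ^T v) ds`, which is at most `(∫₀^T u) exp (∫₀^T v)` when `u, v ≥ 0`.
Apply this to `w = b r`, `u = a b`, `v = K b` and multiply by `K θ`.
-/

open MeasureTheory Set Filter intervalIntegral

theorem LipschitzOnWith.comp_absolutelyContinuousOnInterval {X Y : Type*} [PseudoMetricSpace X]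
    [PseudoMetricSpace Y] {g : X → Y} {f : ℝ → X} {K : NNReal} {s : Set X} {a b : ℝ}
    (hg : LipschitzOnWith K g s) (hf : AbsolutelyContinuousOnInterval f a b)
    (hfs : MapsTo f (uIcc a b) s) : AbsolutelyContinuousOnInterval (g ∘ f) a b := by
  unfold AbsolutelyContinuousOnInterval at hf ⊢
  apply squeeze_zero' (Eventually.of_forall fun _ ↦ Finset.sum_nonneg fun _ _ ↦ dist_nonneg) ?_
    (by simpa using hf.const_mul (K : ℝ))
  rw [eventually_inf_principal]
  filter_upwards with E hE
  rw [Finset.mul_sum]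
  gcongr with i hi
  exact hg.dist_le_mul _ (hfs (hE.1 i hi).1) _ (hfs (hE.1 i hi).2)

theorem LocallyLipschitz.comp_absolutelyContinuousOnInterval {X Y : Type*}
    [SeminormedAddCommGroup X] [PseudoMetricSpace Y] {g : X → Y} {f : ℝ → X} {a b : ℝ}
    (hg : LocallyLipschitz g) (hf : AbsolutelyContinuousOnInterval f a b) :
    AbsolutelyContinuousOnInterval (g ∘ f) a b := by
  obtain ⟨K, hK⟩ := hg.locallyLipschitzOn.exists_lipschitzOnWith_of_compact
    (isCompact_uIcc.image_of_continuousOn hf.continuousOn)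
  exact hK.comp_absolutelyContinuousOnInterval hf (mapsTo_image f (uIcc a b))

theorem integral_le_integral_mul_exp_of_le_add_mul_integral {u v w : ℝ → ℝ} {a b : ℝ}
    (hab : a ≤ b) (hu : IntervalIntegrable u volume a b) (hv : IntervalIntegrable v volume a b)
    (hw : IntervalIntegrable w volume a b)
    (h : ∀ᵐ s, s ∈ Icc a b → w s ≤ u s + v s * ∫ t in a..s, w t) :
    ∫ t in a..b, w t ≤ ∫ s in a..b, u s * Real.exp (∫ t in s..b, v t) := by
  set W := fun x ↦ ∫ t in a..x, w t
  set V := fun x ↦ ∫ t in a..x, v t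
  have hWac : AbsolutelyContinuousOnInterval W a b :=
    hw.absolutelyContinuousOnInterval_intervalIntegral left_mem_uIcc
  have hVac : AbsolutelyContinuousOnInterval V a b :=
    hv.absolutelyContinuousOnInterval_intervalIntegral left_mem_uIcc
  have hEac : AbsolutelyContinuousOnInterval (fun x ↦ Real.exp (-V x)) a b :=
    Real.contDiff_exp.locallyLipschitz.comp_absolutelyContinuousOnInterval hVac.neg
  have hderiv : ∀ᵐ x ∂volume.restrict (Icc a b),
      deriv (fun x ↦ W x * Real.exp (-V x)) x ≤ u x * Real.exp (-V x) := by
    rw [← uIcc_of_le hab]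
    filter_upwards [ae_restrict_of_ae hw.ae_hasDerivAt_integral,
      ae_restrict_of_ae hv.ae_hasDerivAt_integral, ae_restrict_of_ae h,
      ae_restrict_mem measurableSet_uIcc] with x hWx hVx hx hxab
    have hd : HasDerivAt (fun x ↦ W x * Real.exp (-V x))
        (w x * Real.exp (-V x) + W x * (Real.exp (-V x) * -v x)) x :=
      (hWx hxab a left_mem_uIcc).mul (hVx hxab a left_mem_uIcc).neg.exp
    rw [hd.deriv]
    have hwx := hx (uIcc_of_le hab ▸ hxab)
    nlinarith [Real.exp_pos (-V x)]
  have hFTC := (hWac.fun_mul hEac).integral_deriv_eq_sub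
  have hmono := integral_mono_ae_restrict hab (hWac.fun_mul hEac).intervalIntegrable_deriv
    (hu.mul_continuousOn (Real.continuous_exp.comp_continuousOn hVac.neg.continuousOn)) hderiv
  have hRHS : ∫ s in a..b, u s * Real.exp (∫ t in s..b, v t)
      = Real.exp (V b) * ∫ s in a..b, u s * Real.exp (-V s) := by
    rw [← intervalIntegral.integral_const_mul]
    refine integral_congr fun s hs ↦ ?_
    rw [← integral_interval_sub_left hv (hv.mono_set (uIcc_subset_uIcc left_mem_uIcc hs)),
      sub_eq_add_neg, Real.exp_add]
    ring
  have hW0 : W a = 0 := integral_same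
  calc W b = Real.exp (V b) * (W b * Real.exp (-V b)) := by
        rw [Real.exp_neg]; field_simp
    _ ≤ Real.exp (V b) * ∫ s in a..b, u s * Real.exp (-V s) := by
        gcongr
        simp only [hFTC, hW0, zero_mul, sub_zero] at hmono
        exact hmono
    _ = _ := hRHS.symm

theorem integral_le_integral_mul_exp_integral_of_le_add_mul_integral {u v w : ℝ → ℝ} {a b : ℝ}
    (hab : a ≤ b) (hu : IntervalIntegrable u volume a b) (hv : IntervalIntegrable v volume a b)
    (hw : IntervalIntegrable w volume a b) (hu0 : ∀ s ∈ Icc a b, 0 ≤ u s)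
    (hv0 : ∀ s ∈ Icc a b, 0 ≤ v s)
    (h : ∀ᵐ s, s ∈ Icc a b → w s ≤ u s + v s * ∫ t in a..s, w t) :
    ∫ t in a..b, w t ≤ (∫ t in a..b, u t) * Real.exp (∫ t in a..b, v t) :=
  calc ∫ t in a..b, w t ≤ ∫ s in a..b, u s * Real.exp (∫ t in s..b, v t) :=
        integral_le_integral_mul_exp_of_le_add_mul_integral hab hu hv hw h
    _ ≤ ∫ s in a..b, u s * Real.exp (∫ t in a..b, v t) := by
        refine integral_mono_on hab ?_ (hu.mul_const _) fun s hs ↦ ?_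
        · exact hu.mul_continuousOn (Real.continuous_exp.comp_continuousOn
            (continuousOn_primitive_interval_left ((intervalIntegrable_iff' (f := v)).1 hv)))
        have hs' : s ∈ uIcc a b := uIcc_of_le hab ▸ hs
        rw [← integral_add_adjacent_intervals (hv.mono_set (uIcc_subset_uIcc left_mem_uIcc hs'))
          (hv.mono_set (uIcc_subset_uIcc hs' right_mem_uIcc))]
        have hVs : 0 ≤ ∫ t in a..s, v t :=
          integral_nonneg hs.1 fun t ht ↦ hv0 t ⟨ht.1, ht.2.trans hs.2⟩
        gcongr
        · exact hu0 s hs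
        · linarith
    _ = _ := intervalIntegral.integral_mul_const _ _

theorem stmt18_general (r K a b : ℝ → ℝ)
    (hK0 : ∀ θ ≥ (0:ℝ), 0 ≤ K θ)
    (ha0 : ∀ θ ≥ (0:ℝ), 0 ≤ a θ)
    (hb0 : ∀ θ ≥ (0:ℝ), 0 ≤ b θ)
    (hrloc : ∀ T ≥ (0:ℝ), IntegrableOn r (Set.Icc 0 T))
    (hKloc : ∀ T ≥ (0:ℝ), IntegrableOn K (Set.Icc 0 T))
    (haloc : ∀ T ≥ (0:ℝ), IntegrableOn a (Set.Icc 0 T))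
    (hbc : ContinuousOn b (Set.Ici 0))
    (hineq : ∀ᵐ θ ∂volume, 0 ≤ θ → r θ ≤ a θ + K θ * ∫ s in (0:ℝ)..θ, b s * r s) :
    ∀ᵐ θ ∂volume, 0 ≤ θ →
      r θ ≤ a θ + K θ * (∫ s in (0:ℝ)..θ, a s * b s) *
        Real.exp (∫ s in (0:ℝ)..θ, K s * b s) := by
  have hmul : ∀ {f : ℝ → ℝ}, (∀ T ≥ (0:ℝ), IntegrableOn f (Icc 0 T)) →
      ∀ T ≥ (0:ℝ), IntervalIntegrable (fun s ↦ f s * b s) volume 0 T := fun hf T hT ↦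
    ((intervalIntegrable_iff_integrableOn_Icc_of_le hT).2 (hf T hT)).mul_continuousOn
      (hbc.mono (uIcc_of_le hT ▸ Icc_subset_Ici_self))
  have hbr : ∀ θ ≥ (0:ℝ), ∫ s in (0:ℝ)..θ, b s * r s
      ≤ (∫ s in (0:ℝ)..θ, a s * b s) * Real.exp (∫ s in (0:ℝ)..θ, K s * b s) := by
    intro θ hθ
    refine integral_le_integral_mul_exp_integral_of_le_add_mul_integral hθ (hmul haloc θ hθ)
      (hmul hKloc θ hθ) (by simpa only [mul_comm] using hmul hrloc θ hθ)
      (fun s hs ↦ mul_nonneg (ha0 s hs.1) (hb0 s hs.1))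
      (fun s hs ↦ mul_nonneg (hK0 s hs.1) (hb0 s hs.1)) ?_
    filter_upwards [hineq] with s hs hsθ
    calc b s * r s ≤ b s * (a s + K s * ∫ t in (0:ℝ)..s, b t * r t) :=
          mul_le_mul_of_nonneg_left (hs hsθ.1) (hb0 s hsθ.1)
      _ = _ := by ring
  filter_upwards [hineq] with θ hθ h0
  calc r θ ≤ a θ + K θ * ∫ s in (0:ℝ)..θ, b s * r s := hθ h0
    _ ≤ a θ + K θ * ((∫ s in (0:ℝ)..θ, a s * b s) * Real.exp (∫ s in (0:ℝ)..θ, K s * b s)) := by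
        gcongr
        exacts [hK0 θ h0, hbr θ h0]
    _ = _ := by ring

/-- generalized Gronwall inequality, Lemma A.1: if `r, K, a` are
nonnegative locally integrable functions on `[0,∞)`, `b` is nonnegative and continuous, and
`r(θ) ≤ a(θ) + K(θ) ∫₀^θ b(s) r(s) ds` for almost all `θ ≥ 0`, then
`r(θ) ≤ a(θ) + K(θ) (∫₀^θ a(s) b(s) ds) exp(∫₀^θ K(s) b(s) ds)` for almost all `θ ≥ 0`. -/
theorem stmt18 (r K a b : ℝ → ℝ)
    (hr0 : ∀ θ ≥ (0:ℝ), 0 ≤ r θ)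
    (hK0 : ∀ θ ≥ (0:ℝ), 0 ≤ K θ)
    (ha0 : ∀ θ ≥ (0:ℝ), 0 ≤ a θ)
    (hb0 : ∀ θ ≥ (0:ℝ), 0 ≤ b θ)
    (hrloc : ∀ T ≥ (0:ℝ), IntegrableOn r (Set.Icc 0 T))
    (hKloc : ∀ T ≥ (0:ℝ), IntegrableOn K (Set.Icc 0 T))
    (haloc : ∀ T ≥ (0:ℝ), IntegrableOn a (Set.Icc 0 T))
    (hbc : ContinuousOn b (Set.Ici 0))
    (hineq : ∀ᵐ θ ∂volume, 0 ≤ θ → r θ ≤ a θ + K θ * ∫ s in (0:ℝ)..θ, b s * r s) :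
    ∀ᵐ θ ∂volume, 0 ≤ θ →
      r θ ≤ a θ + K θ * (∫ s in (0:ℝ)..θ, a s * b s) *
        Real.exp (∫ s in (0:ℝ)..θ, K s * b s) :=
  stmt18_general r K a b hK0 ha0 hb0 hrloc hKloc haloc hbc hineq
end
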